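/- arXiv:2502.04917 — 5 statements merged into one kernel-verified Lean document; each statement's English description precedes it below -/
import Mathlib

section
/- For every degree k and every n, every monomial x₁^{k₁}···x_n^{k_n} with k₁+···+k_n = k can be written as a finite real linear combination of functions of the form (a₁x₁ + ··· + a_nx_n)^k with (a₁,…,a_n) ∈ ℝⁿ. -/
open Finset

private lemma waring_aux_inclusion_exclusion (k : ℕ) (T : Finset (Fin k)) :
    ∑ S : Finset (Fin k), (if T ⊆ S then (-1:ℝ)^(k - S.card) else 0)
      = if T = univ then 1 else 0 := by
  classical
  rw [Finset.sum_ite, Finset.sum_const_zero, add_zero]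
  have hbij : ∑ S ∈ Finset.univ.filter (fun S => T ⊆ S), (-1:ℝ)^(k - S.card)
      = ∑ U ∈ Tᶜ.powerset, (-1:ℝ)^(k - (T ∪ U).card) := by
    refine Finset.sum_nbij' (fun S => S \ T) (fun U => T ∪ U) ?_ ?_ ?_ ?_ ?_
    · intro S hS
      simp only [Finset.mem_filter] at hS
      simp only [Finset.mem_powerset]
      intro x hx
      simp only [Finset.mem_sdiff] at hx
      simp [Finset.mem_compl, hx.2]
    · intro U hU
      simp only [Finset.mem_filter, Finset.mem_univ, true_and]
      exact Finset.subset_union_left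
    · intro S hS
      simp only [Finset.mem_filter] at hS
      exact Finset.union_sdiff_of_subset hS.2
    · intro U hU
      simp only [Finset.mem_powerset] at hU
      refine Finset.union_sdiff_cancel_left ?_
      exact Finset.disjoint_left.mpr fun x hxT hxU => by
        have := hU hxU; simp [Finset.mem_compl, hxT] at this
    · intro S hS
      simp only [Finset.mem_filter] at hS
      congr 1
      rw [Finset.union_sdiff_of_subset hS.2]
  rw [hbij]
  have hcard : ∀ U ∈ Tᶜ.powerset, (-1:ℝ)^(k - (T ∪ U).card) = (-1:ℝ)^(Tᶜ.card - U.card) := by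
    intro U hU
    simp only [Finset.mem_powerset] at hU
    have hdisj : Disjoint T U := Finset.disjoint_left.mpr fun x hxT hxU => by
      have := hU hxU; simp [Finset.mem_compl, hxT] at this
    have h1 : (T ∪ U).card = T.card + U.card := Finset.card_union_of_disjoint hdisj
    have h2 : Tᶜ.card = k - T.card := by
      rw [Finset.card_compl]; simp
    have h3 : U.card ≤ Tᶜ.card := Finset.card_le_card hU
    have h4 : T.card + U.card ≤ k := by
      have := Finset.card_le_card (Finset.union_subset_iff.mpr ⟨Finset.subset_univ T, Finset.subset_univ U⟩ : T ∪ U ⊆ univ)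
      simpa [h1] using this
    rw [h1]
    congr 1
    omega
  rw [Finset.sum_congr rfl hcard]
  have key : ∑ U ∈ Tᶜ.powerset, (-1:ℝ)^(Tᶜ.card - U.card) = (0:ℝ) ^ Tᶜ.card := by
    have := Finset.prod_add (fun _ : Fin k => (1:ℝ)) (fun _ => (-1:ℝ)) Tᶜ
    simp only [Finset.prod_const, one_pow, one_mul] at this
    rw [show (1:ℝ) + -1 = 0 by ring] at this
    rw [this]
    refine Finset.sum_congr rfl fun U hU => ?_
    simp only [Finset.mem_powerset] at hU
    rw [Finset.card_sdiff_of_subset hU]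
  rw [key]
  by_cases hT : T = univ
  · simp [hT]
  · have : Tᶜ.card ≠ 0 := by
      simp only [ne_eq, Finset.card_eq_zero]
      intro h
      exact hT (by simpa using congrArg compl h)
    simp [hT, zero_pow this]

private lemma waring_polarization (k : ℕ) (y : Fin k → ℝ) :
    ∑ S : Finset (Fin k), (-1:ℝ)^(k - S.card) * (∑ j ∈ S, y j)^k
      = (k.factorial : ℝ) * ∏ j, y j := by
  classical
  have expand : ∀ S : Finset (Fin k), (∑ j ∈ S, y j)^k
      = ∑ f ∈ Fintype.piFinset (fun _ : Fin k => S), ∏ i, y (f i) := by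
    intro S
    have : (∑ j ∈ S, y j)^k = ∏ _i : Fin k, (∑ j ∈ S, y j) := by
      rw [Finset.prod_const, Finset.card_univ, Fintype.card_fin]
    rw [this, Finset.prod_univ_sum]
  calc ∑ S : Finset (Fin k), (-1:ℝ)^(k - S.card) * (∑ j ∈ S, y j)^k
      = ∑ S : Finset (Fin k), ∑ f : Fin k → Fin k,
          (if Finset.image f univ ⊆ S then (-1:ℝ)^(k - S.card) else 0) * ∏ i, y (f i) := by
        refine Finset.sum_congr rfl fun S _ => ?_
        rw [expand S, Finset.mul_sum, ← Finset.univ_inter (Fintype.piFinset fun _ : Fin k => S),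
          ← Finset.sum_ite_mem]
        refine Finset.sum_congr rfl fun f _ => ?_
        have hiff : (f ∈ Fintype.piFinset fun _ : Fin k => S) ↔ Finset.image f univ ⊆ S := by
          rw [Fintype.mem_piFinset, Finset.image_subset_iff]
          simp
        simp only [hiff]
        split <;> simp
    _ = ∑ f : Fin k → Fin k, (∑ S : Finset (Fin k),
          (if Finset.image f univ ⊆ S then (-1:ℝ)^(k - S.card) else 0)) * ∏ i, y (f i) := by
        rw [Finset.sum_comm]
        refine Finset.sum_congr rfl fun f _ => ?_
        rw [Finset.sum_mul]
    _ = ∑ f : Fin k → Fin k, (if Finset.image f univ = univ then (1:ℝ) else 0) * ∏ i, y (f i) := by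
        refine Finset.sum_congr rfl fun f _ => ?_
        rw [waring_aux_inclusion_exclusion]
    _ = ∑ f ∈ Finset.univ.filter (fun f : Fin k → Fin k => Finset.image f univ = univ),
          ∏ i, y (f i) := by
        rw [Finset.sum_filter]
        refine Finset.sum_congr rfl fun f _ => ?_
        split <;> simp
    _ = ∑ f ∈ Finset.univ.filter (fun f : Fin k → Fin k => Finset.image f univ = univ),
          ∏ i, y i := by
        refine Finset.sum_congr rfl fun f hf => ?_
        simp only [Finset.mem_filter] at hf
        have hsurj : Function.Surjective f := fun b => by
          have : b ∈ Finset.image f univ := by rw [hf.2]; exact Finset.mem_univ b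
          obtain ⟨a, _, ha⟩ := Finset.mem_image.mp this
          exact ⟨a, ha⟩
        have hbij : Function.Bijective f := Finite.surjective_iff_bijective.mp hsurj
        exact Fintype.prod_bijective f hbij _ _ (fun x => rfl)
    _ = (k.factorial : ℝ) * ∏ j, y j := by
        rw [Finset.sum_const, nsmul_eq_mul]
        congr 1
        have hcard : (Finset.univ.filter
            (fun f : Fin k → Fin k => Finset.image f univ = univ)).card
            = Fintype.card {f : Fin k → Fin k // Finset.image f univ = univ} := by
          rw [Fintype.card_subtype]
        rw [hcard]
        have e : {f : Fin k → Fin k // Finset.image f univ = univ} ≃ Equiv.Perm (Fin k) := by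
          refine { toFun := fun f => Equiv.ofBijective f.1 ?_,
                   invFun := fun σ => ⟨σ, ?_⟩, left_inv := ?_, right_inv := ?_ }
          · have hsurj : Function.Surjective f.1 := fun b => by
              have : b ∈ Finset.image f.1 univ := by rw [f.2]; exact Finset.mem_univ b
              obtain ⟨a, _, ha⟩ := Finset.mem_image.mp this
              exact ⟨a, ha⟩
            exact Finite.surjective_iff_bijective.mp hsurj
          · apply Finset.eq_univ_iff_forall.mpr
            intro b
            exact Finset.mem_image.mpr ⟨σ.symm b, Finset.mem_univ _, σ.apply_symm_apply b⟩
          · intro f; rfl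
          · intro σ; ext x; rfl
        rw [Fintype.card_congr e, Fintype.card_perm, Fintype.card_fin]

private lemma waring_prod_comp_mem (k n : ℕ) (g : Fin k → Fin n) :
    (fun x : Fin n → ℝ => ∏ j, x (g j)) ∈
      Submodule.span ℝ
        {f : (Fin n → ℝ) → ℝ | ∃ a : Fin n → ℝ, f = fun x => (∑ i, a i * x i) ^ k} := by
  classical
  have key : (fun x : Fin n → ℝ => ∏ j, x (g j))
      = ∑ S : Finset (Fin k), (((k.factorial : ℝ))⁻¹ * (-1)^(k - S.card)) •
          (fun x : Fin n → ℝ =>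
            (∑ i, ((S.filter (fun j => g j = i)).card : ℝ) * x i) ^ k) := by
    funext x
    rw [Finset.sum_apply]
    simp only [Pi.smul_apply, smul_eq_mul]
    have hlin : ∀ S : Finset (Fin k),
        ∑ i, ((S.filter (fun j => g j = i)).card : ℝ) * x i = ∑ j ∈ S, x (g j) := by
      intro S
      rw [← Finset.sum_fiberwise_of_maps_to (fun j _ => Finset.mem_univ (g j)) (fun j => x (g j))]
      refine Finset.sum_congr rfl fun i _ => ?_
      have hstep : ∑ j ∈ S.filter (fun j => g j = i), x (g j)
          = ∑ j ∈ S.filter (fun j => g j = i), x i :=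
        Finset.sum_congr rfl fun j hj => by rw [(Finset.mem_filter.mp hj).2]
      rw [hstep, Finset.sum_const, nsmul_eq_mul]
    calc ∏ j, x (g j)
        = ((k.factorial : ℝ))⁻¹ * ((k.factorial : ℝ) * ∏ j, x (g j)) := by
          rw [← mul_assoc, inv_mul_cancel₀ (by exact_mod_cast k.factorial_ne_zero), one_mul]
      _ = ((k.factorial : ℝ))⁻¹ * ∑ S : Finset (Fin k),
            (-1:ℝ)^(k - S.card) * (∑ j ∈ S, x (g j))^k := by
          rw [waring_polarization k (fun j => x (g j))]
      _ = _ := by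
          rw [Finset.mul_sum]
          refine Finset.sum_congr rfl fun S _ => ?_
          rw [hlin S, mul_assoc]
  rw [key]
  refine Submodule.sum_mem _ fun S _ => Submodule.smul_mem _ _ ?_
  exact Submodule.subset_span ⟨fun i => ((S.filter (fun j => g j = i)).card : ℝ), rfl⟩

theorem waring_monomial_in_span_powers_of_linear_forms
    (k n : ℕ) (m : Fin n → ℕ) (hm : ∑ i, m i = k) :
    (fun x : Fin n → ℝ => ∏ i, x i ^ m i) ∈
      Submodule.span ℝ
        {f : (Fin n → ℝ) → ℝ | ∃ a : Fin n → ℝ, f = fun x => (∑ i, a i * x i) ^ k} := by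
  classical
  have hcard : Fintype.card (Σ i : Fin n, Fin (m i)) = k := by
    simp [Fintype.card_sigma, hm]
  let e : (Σ i : Fin n, Fin (m i)) ≃ Fin k := Fintype.equivFinOfCardEq hcard
  have hfun : (fun x : Fin n → ℝ => ∏ i, x i ^ m i)
      = fun x : Fin n → ℝ => ∏ j, x ((e.symm j).1) := by
    funext x
    rw [Equiv.prod_comp e.symm (fun p : Σ i : Fin n, Fin (m i) => x p.1)]
    rw [← Finset.univ_sigma_univ, Finset.prod_sigma]
    simp
  rw [hfun]
  exact waring_prod_comp_mem k n (fun j => (e.symm j).1)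
end

section
/- The real linear span of the set of functions {x ↦ (a₁x₁ + ··· + a_nx_n)^k : k ∈ ℕ, a ∈ ℝⁿ} contains all polynomial functions ℝⁿ → ℝ. -/
open Finset

set_option synthInstance.maxHeartbeats 1000000
set_option maxHeartbeats 1000000

section Aux

variable {n : ℕ}

local notation "M" => ((Fin n → ℝ) → ℝ)

private def genSet (n : ℕ) : Set ((Fin n → ℝ) → ℝ) :=
  {f : (Fin n → ℝ) → ℝ |
    ∃ (k : ℕ) (a : Fin n → ℝ), f = fun x => (∑ i, a i * x i) ^ k}

private lemma key_mul_gen (i : Fin n) (k : ℕ) (a : Fin n → ℝ) :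
    (fun x : Fin n → ℝ => x i * (∑ j, a j * x j) ^ k) ∈
      Submodule.span ℝ (genSet n) := by
  set S := Submodule.span ℝ (genSet n) with hS
  set m : ℕ → M := fun j => fun x =>
    (∑ j', a j' * x j') ^ j * (x i) ^ (k + 1 - j) * ((k+1).choose j : ℝ) with hm
  have hsum : ∀ t : ℝ, (∑ j ∈ range (k + 2), t ^ (k + 1 - j) • m j) ∈ S := by
    intro t
    have : (∑ j ∈ range (k + 2), t ^ (k + 1 - j) • m j) =
        fun x : Fin n → ℝ => (∑ j, (a j + t * (if j = i then 1 else 0)) * x j) ^ (k + 1) := by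
      funext x
      have hlin : (∑ j, (a j + t * (if j = i then 1 else 0)) * x j)
          = (∑ j, a j * x j) + t * x i := by
        simp only [add_mul]
        rw [Finset.sum_add_distrib]
        congr 1
        rw [Finset.sum_eq_single i]
        · simp
        · intro b _ hb; simp [hb]
        · simp
      rw [hlin, add_pow]
      simp only [Finset.sum_apply, Pi.smul_apply, smul_eq_mul, hm]
      apply Finset.sum_congr rfl
      intro j hj
      push_cast
      ring
    rw [this]
    exact Submodule.subset_span ⟨k + 1, _, rfl⟩
  have hmem : m k ∈ S := by
    rw [← Submodule.Quotient.mk_eq_zero]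
    rw [← Module.forall_dual_apply_eq_zero_iff ℝ]
    intro φ
    set P : Polynomial ℝ :=
      ∑ j ∈ range (k + 2), Polynomial.C (φ (S.mkQ (m j)))
        * Polynomial.X ^ (k + 1 - j) with hP
    have hev : ∀ t : ℝ, P.eval t = 0 := by
      intro t
      have h0 : S.mkQ (∑ j ∈ range (k + 2), t ^ (k + 1 - j) • m j) = 0 := by
        rw [Submodule.mkQ_apply]
        exact (Submodule.Quotient.mk_eq_zero S).2 (hsum t)
      have : P.eval t = φ (S.mkQ (∑ j ∈ range (k + 2), t ^ (k + 1 - j) • m j)) := by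
        rw [hP, map_sum, map_sum]
        simp only [Polynomial.eval_finset_sum, Polynomial.eval_mul, Polynomial.eval_pow,
          Polynomial.eval_C, Polynomial.eval_X, map_smul, smul_eq_mul]
        apply Finset.sum_congr rfl
        intro j hj
        ring
      rw [this, h0, map_zero]
    have hP0 : P = 0 := by
      apply Polynomial.funext
      intro t
      simp [hev t]
    have hcoeff : P.coeff 1 = φ (S.mkQ (m k)) := by
      rw [hP, Polynomial.finset_sum_coeff]
      rw [Finset.sum_eq_single k]
      · have h1 : k + 1 - k = 1 := by omega
        simp [h1]
      · intro b hb hbk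
        simp only [Finset.mem_range] at hb
        have h2 : (1:ℕ) ≠ k + 1 - b := by omega
        simp [Polynomial.coeff_C_mul, Polynomial.coeff_X_pow, h2]
      · intro h; exact absurd (by simp : k ∈ range (k+2)) h
    have := hcoeff.symm
    rw [hP0] at hcoeff
    simpa using hcoeff.symm
  have heq : (fun x : Fin n → ℝ => x i * (∑ j, a j * x j) ^ k)
      = ((k : ℝ) + 1)⁻¹ • m k := by
    funext x
    have hk : ((k : ℝ) + 1) ≠ 0 := by positivity
    simp only [hm, Pi.smul_apply, smul_eq_mul, Nat.choose_succ_self_right, pow_one,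
      Nat.add_sub_cancel_left]
    push_cast
    field_simp
  rw [heq]
  exact Submodule.smul_mem _ _ hmem

private lemma mul_xi (i : Fin n) (f : M)
    (hf : f ∈ Submodule.span ℝ (genSet n)) :
    (fun x : Fin n → ℝ => x i * f x) ∈ Submodule.span ℝ (genSet n) := by
  induction hf using Submodule.span_induction with
  | mem g hg =>
      obtain ⟨k, a, rfl⟩ := hg
      exact key_mul_gen i k a
  | zero =>
      have : (fun x : Fin n → ℝ => x i * (0 : M) x) = 0 := by funext x; simp
      rw [this]; exact Submodule.zero_mem _
  | add g h _ _ hg hh =>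
      have : (fun x : Fin n → ℝ => x i * (g + h) x)
          = (fun x => x i * g x) + fun x => x i * h x := by
        funext x; simp [mul_add]
      rw [this]; exact Submodule.add_mem _ hg hh
  | smul c g _ hg =>
      have : (fun x : Fin n → ℝ => x i * (c • g) x)
          = c • fun x => x i * g x := by
        funext x; simp [mul_comm, mul_left_comm]
      rw [this]; exact Submodule.smul_mem _ _ hg

end Aux

theorem polynomial_in_span_powers_of_linear_forms
    (n : ℕ) (p : MvPolynomial (Fin n) ℝ) :
    (fun x : Fin n → ℝ => MvPolynomial.eval x p) ∈
      Submodule.span ℝ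
        {f : (Fin n → ℝ) → ℝ |
          ∃ (k : ℕ) (a : Fin n → ℝ), f = fun x => (∑ i, a i * x i) ^ k} := by
  show _ ∈ Submodule.span ℝ (genSet n)
  induction p using MvPolynomial.induction_on with
  | C a =>
      have h1 : (fun _ : Fin n → ℝ => (1:ℝ)) ∈ Submodule.span ℝ (genSet n) := by
        apply Submodule.subset_span
        exact ⟨0, 0, by funext x; simp⟩
      have : (fun x : Fin n → ℝ => MvPolynomial.eval x (MvPolynomial.C a : MvPolynomial (Fin n) ℝ))
          = a • fun _ => (1:ℝ) := by funext x; simp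
      rw [this]
      exact Submodule.smul_mem _ _ h1
  | add p q hp hq =>
      have : (fun x : Fin n → ℝ => MvPolynomial.eval x (p + q))
          = (fun x => MvPolynomial.eval x p) + fun x => MvPolynomial.eval x q := by
        funext x; simp
      rw [this]
      exact Submodule.add_mem _ hp hq
  | mul_X p i hp =>
      have : (fun x : Fin n → ℝ => MvPolynomial.eval x (p * MvPolynomial.X i))
          = fun x => x i * MvPolynomial.eval x p := by
        funext x; simp [mul_comm]
      rw [this]
      exact mul_xi i _ hp
end

section
/- Suppose Φ ⊆ C(ℝ, ℝ) is a family of continuous functions whose finite linear combinations of precomposed translates/dilates are uniformly dense on compact subsets of ℝ in C(ℝ,ℝ) (the one-dimensional universal approximation property). Then the family Φᴺ := {x ↦ φ(a·x) : a ∈ ℝᴺ, φ ∈ Φ} has the universal approximation property on compact subsets of ℝᴺ: every continuous g : K → ℝ on a compact K ⊆ ℝᴺ can be uniformly approximated by finite linear combinations of elements of Φᴺ. -/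
set_option maxHeartbeats 1000000


open Finset

theorem general_approximation_theorem
    (N : ℕ) (Φ : Set (ℝ → ℝ)) (hΦc : ∀ φ ∈ Φ, Continuous φ)
    (hUAP : ∀ K : Set ℝ, IsCompact K → ∀ g : ℝ → ℝ, ContinuousOn g K →
      ∀ ε > (0 : ℝ), ∃ h ∈ Submodule.span ℝ Φ, ∀ x ∈ K, |g x - h x| < ε) :
    ∀ K : Set (Fin N → ℝ), IsCompact K → ∀ g : (Fin N → ℝ) → ℝ, ContinuousOn g K →
      ∀ ε > (0 : ℝ),
        ∃ h ∈ Submodule.span ℝ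
            {f : (Fin N → ℝ) → ℝ |
              ∃ (a : Fin N → ℝ), ∃ φ ∈ Φ, f = fun x => φ (∑ i, a i * x i)},
          ∀ x ∈ K, |g x - h x| < ε := by
  intro K hK g hg ε hε
  set ΦN : Set ((Fin N → ℝ) → ℝ) :=
    {f : (Fin N → ℝ) → ℝ |
      ∃ (a : Fin N → ℝ), ∃ φ ∈ Φ, f = fun x => φ (∑ i, a i * x i)} with hΦN
  haveI : CompactSpace K := isCompact_iff_compactSpace.mp hK
  -- the exponential ridge functions on K
  have contlin : ∀ a : Fin N → ℝ, Continuous fun x : K => ∑ i, a i * (x : Fin N → ℝ) i := by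
    intro a
    exact continuous_finset_sum _ fun i _ =>
      (continuous_const.mul ((continuous_apply i).comp continuous_subtype_val))
  let expa : (Fin N → ℝ) → C(K, ℝ) := fun a =>
    ⟨fun x => Real.exp (∑ i, a i * (x : Fin N → ℝ) i),
      Real.continuous_exp.comp (contlin a)⟩
  have expa_mul : ∀ a b, expa a * expa b = expa (a + b) := by
    intro a b
    ext x
    simp only [ContinuousMap.mul_apply, expa, ContinuousMap.coe_mk]
    rw [← Real.exp_add]
    congr 1
    rw [← Finset.sum_add_distrib]
    exact Finset.sum_congr rfl fun i _ => by simp [add_mul]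
  have expa_one : expa 0 = 1 := by
    ext x; simp [expa]
  -- the span of the exponentials is a subalgebra
  have hmul : ∀ p q : C(K, ℝ), p ∈ Submodule.span ℝ (Set.range expa) →
      q ∈ Submodule.span ℝ (Set.range expa) → p * q ∈ Submodule.span ℝ (Set.range expa) := by
    intro p q hp hq
    induction hp using Submodule.span_induction with
    | mem p hpm =>
      induction hq using Submodule.span_induction with
      | mem q hqm =>
        obtain ⟨a, rfl⟩ := hpm
        obtain ⟨b, rfl⟩ := hqm
        rw [expa_mul]
        exact Submodule.subset_span ⟨a + b, rfl⟩
      | zero => rw [mul_zero]; exact Submodule.zero_mem _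
      | add q r _ _ hq1 hq2 => rw [mul_add]; exact Submodule.add_mem _ hq1 hq2
      | smul c q _ hq1 => rw [mul_smul_comm]; exact Submodule.smul_mem _ _ hq1
    | zero => rw [zero_mul]; exact Submodule.zero_mem _
    | add p r _ _ hp1 hp2 => rw [add_mul]; exact Submodule.add_mem _ hp1 hp2
    | smul c p _ hp1 => rw [smul_mul_assoc]; exact Submodule.smul_mem _ _ hp1
  let E : Subalgebra ℝ C(K, ℝ) :=
    (Submodule.span ℝ (Set.range expa)).toSubalgebra
      (expa_one ▸ Submodule.subset_span ⟨0, rfl⟩) hmul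
  have hsep : E.SeparatesPoints := by
    intro x y hxy
    have : (x : Fin N → ℝ) ≠ (y : Fin N → ℝ) := fun h => hxy (Subtype.ext h)
    obtain ⟨i, hi⟩ := Function.ne_iff.mp this
    refine ⟨_, ⟨expa (Pi.single i 1), Submodule.subset_span ⟨Pi.single i 1, rfl⟩, rfl⟩, ?_⟩
    simp only [expa, ContinuousMap.coe_mk]
    have hx : ∀ z : K, ∑ j, (Pi.single i (1:ℝ) : Fin N → ℝ) j * (z : Fin N → ℝ) j = (z : Fin N → ℝ) i := by
      intro z
      simp [Pi.single_apply, ite_mul, Finset.sum_ite_eq']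
    rw [hx, hx]
    exact fun h => hi (Real.exp_injective h)
  -- Stone-Weierstrass approximation of g by exponentials
  obtain ⟨⟨p, hpE⟩, hp⟩ :=
    ContinuousMap.exists_mem_subalgebra_near_continuous_of_separatesPoints E hsep
      (K.restrict g) (ContinuousOn.restrict hg) (ε / 2) (half_pos hε)
  have hpE' : p ∈ Submodule.span ℝ (Set.range expa) := hpE
  obtain ⟨n, c, e, hpc⟩ := Submodule.mem_span_set'.mp hpE'
  choose a ha using fun i => (e i).2
  -- approximate exp by elements of span Φ on the images of the linear maps
  set δ : ℝ := ε / (2 * (∑ i, |c i| + 1)) with hδdef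
  have hsumpos : (0:ℝ) < ∑ i, |c i| + 1 := by positivity
  have hδ : 0 < δ := by positivity
  have hexp : ∀ i : Fin n, ∃ h ∈ Submodule.span ℝ Φ,
      ∀ t ∈ (fun x : Fin N → ℝ => ∑ j, a i j * x j) '' K, |Real.exp t - h t| < δ := by
    intro i
    exact hUAP _ (hK.image (by continuity)) Real.exp Real.continuous_exp.continuousOn δ hδ
  choose hf hfmem hfapprox using hexp
  -- the final approximant
  refine ⟨fun x => ∑ i, c i * hf i (∑ j, a i j * x j), ?_, ?_⟩
  · have key : (fun x : Fin N → ℝ => ∑ i, c i * hf i (∑ j, a i j * x j)) =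
        ∑ i, c i • (LinearMap.funLeft ℝ ℝ (fun x : Fin N → ℝ => ∑ j, a i j * x j)) (hf i) := by
      funext x
      simp [Finset.sum_apply, LinearMap.funLeft_apply]
    rw [key]
    apply Submodule.sum_mem
    intro i _
    apply Submodule.smul_mem
    have : (LinearMap.funLeft ℝ ℝ (fun x : Fin N → ℝ => ∑ j, a i j * x j)) (hf i) ∈
        Submodule.map (LinearMap.funLeft ℝ ℝ (fun x : Fin N → ℝ => ∑ j, a i j * x j))
          (Submodule.span ℝ Φ) := Submodule.mem_map_of_mem (hfmem i)
    rw [Submodule.map_span] at this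
    refine Submodule.span_le.mpr ?_ this
    rintro f ⟨φ, hφ, rfl⟩
    exact Submodule.subset_span ⟨a i, φ, hφ, rfl⟩
  · intro x hx
    have hpx : p ⟨x, hx⟩ = ∑ i, c i * Real.exp (∑ j, a i j * x j) := by
      rw [← hpc]
      rw [ContinuousMap.sum_apply]
      refine Finset.sum_congr rfl fun i _ => ?_
      have : (e i : C(K, ℝ)) = expa (a i) := (ha i).symm
      rw [ContinuousMap.smul_apply, this]
      rfl
    have h1 : |g x - p ⟨x, hx⟩| < ε / 2 := by
      have := hp ⟨x, hx⟩
      rw [Real.norm_eq_abs] at this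
      rw [abs_sub_comm]
      exact this
    have h2 : |p ⟨x, hx⟩ - ∑ i, c i * hf i (∑ j, a i j * x j)| ≤ ε / 2 := by
      rw [hpx, ← Finset.sum_sub_distrib]
      calc |∑ i, (c i * Real.exp (∑ j, a i j * x j) - c i * hf i (∑ j, a i j * x j))|
          ≤ ∑ i, |c i * Real.exp (∑ j, a i j * x j) - c i * hf i (∑ j, a i j * x j)| :=
            Finset.abs_sum_le_sum_abs _ _
        _ ≤ ∑ i, |c i| * δ := by
            refine Finset.sum_le_sum fun i _ => ?_
            rw [← mul_sub, abs_mul]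
            refine mul_le_mul_of_nonneg_left ?_ (abs_nonneg _)
            exact le_of_lt (hfapprox i _ ⟨x, hx, rfl⟩)
        _ = (∑ i, |c i|) * δ := by rw [Finset.sum_mul]
        _ ≤ (∑ i, |c i| + 1) * δ := by nlinarith
        _ = ε / 2 := by
            rw [hδdef]; field_simp
    calc |g x - ∑ i, c i * hf i (∑ j, a i j * x j)|
        ≤ |g x - p ⟨x, hx⟩| + |p ⟨x, hx⟩ - ∑ i, c i * hf i (∑ j, a i j * x j)| :=
          abs_sub_le _ _ _
      _ < ε / 2 + ε / 2 := by linarith [h2]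
      _ = ε := by ring
end

section
/- For |z| < 1 the error of the m-point trapezoidal discretization of the Cauchy integral for the constant function 1 decays exponentially: |(1/m) ∑_{k=0}^{m−1} ζᵏ/(ζᵏ − z) − 1| ≤ |z|^m / (1 − |z|^m), where ζᵏ = e^{2πik/m}. -/
/-!
Expanding `x / (x - z) = 1 / (1 - z / x)` as a finite geometric series in `z / x` (exact, since
`x ^ m = 1`) and summing over the `m`-th roots of unity `x = ζ ^ k`, every power `(z / x) ^ j` with
`0 < j < m` averages to zero, so `(1 / m) ∑ ζ ^ k / (ζ ^ k - z) = 1 / (1 - z ^ m)`. The error is then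
`z ^ m / (1 - z ^ m)`, whose denominator is at least `1 - ‖z‖ ^ m` in norm.
-/

open Complex Finset

theorem div_sub_eq_geom_sum_div {K : Type*} [Field K] {m : ℕ} {x z : K} (hx : x ^ m = 1)
    (hz : z ^ m ≠ 1) :
    x / (x - z) = (∑ j ∈ range m, (z / x) ^ j) / (1 - z ^ m) := by
  have hx0 : x ≠ 0 := by
    rintro rfl
    rcases m with _ | m
    · exact hz (pow_zero z)
    · simp at hx
  have hxz : x - z ≠ 0 := sub_ne_zero.2 fun h => hz (h ▸ hx)
  have hmz : 1 - z ^ m = (1 - z / x) * ∑ j ∈ range m, (z / x) ^ j := by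
    rw [mul_neg_geom_sum, div_pow, hx, div_one]
  have hcancel : x / (x - z) * (1 - z / x) = 1 := by field_simp
  rw [eq_div_iff (sub_ne_zero.2 (Ne.symm hz)), hmz, ← mul_assoc, hcancel, one_mul]

namespace IsPrimitiveRoot

variable {K : Type*} [Field K] {ζ : K} {m : ℕ}

theorem sum_pow_pow_eq_ite (hζ : IsPrimitiveRoot ζ m) {j : ℕ} (hj : j < m) :
    ∑ k ∈ range m, (ζ ^ k) ^ j = if j = 0 then (m : K) else 0 := by
  split_ifs with hj0
  · simp [hj0]
  · simp_rw [← pow_mul, mul_comm _ j, pow_mul]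
    rw [geom_sum_eq (hζ.pow_ne_one_of_pos_of_lt hj0 hj), pow_right_comm, hζ.pow_eq_one, one_pow,
      sub_self, zero_div]

theorem sum_div_sub_eq (hζ : IsPrimitiveRoot ζ m) {z : K} (hz : z ^ m ≠ 1) :
    ∑ k ∈ range m, ζ ^ k / (ζ ^ k - z) = m / (1 - z ^ m) := by
  have hm : 0 < m := Nat.pos_of_ne_zero fun h => hz (h ▸ pow_zero z)
  calc ∑ k ∈ range m, ζ ^ k / (ζ ^ k - z)
      = ∑ k ∈ range m, (∑ j ∈ range m, (z / ζ ^ k) ^ j) / (1 - z ^ m) := by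
        refine sum_congr rfl fun k _ => div_sub_eq_geom_sum_div ?_ hz
        rw [pow_right_comm, hζ.pow_eq_one, one_pow]
    _ = (∑ j ∈ range m, z ^ j * ∑ k ∈ range m, ((ζ⁻¹) ^ k) ^ j) / (1 - z ^ m) := by
        simp_rw [← sum_div, mul_sum, div_eq_mul_inv z, mul_pow, inv_pow]
        rw [sum_comm]
    _ = m / (1 - z ^ m) := by
        rw [sum_congr rfl fun j hj => by rw [hζ.inv.sum_pow_pow_eq_ite (mem_range.1 hj)]]
        simp [hm]

end IsPrimitiveRoot

theorem norm_inv_one_sub_sub_one_le {𝕜 : Type*} [NormedField 𝕜] {w : 𝕜} (hw : ‖w‖ < 1) :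
    ‖(1 - w)⁻¹ - 1‖ ≤ ‖w‖ / (1 - ‖w‖) := by
  have hden : 1 - ‖w‖ ≤ ‖1 - w‖ := by simpa using norm_sub_norm_le (1 : 𝕜) w
  have hw1 : 1 - w ≠ 0 := sub_ne_zero.2 fun h => by simp [← h] at hw
  have hid : (1 - w)⁻¹ - 1 = w / (1 - w) := by field_simp; ring
  rw [hid, norm_div]
  gcongr

theorem Complex.exp_two_pi_mul_I_mul_div (k m : ℕ) :
    exp (2 * π * I * k / m) = exp (2 * π * I / m) ^ k := by
  rw [← exp_nat_mul]
  ring_nf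

theorem trapezoidal_cauchy_exponential_error
    (m : ℕ) (hm : 1 ≤ m) (z : ℂ) (hz : ‖z‖ < 1) :
    ‖((1 / (m : ℂ)) *
            (∑ k ∈ Finset.range m,
              Complex.exp (2 * Real.pi * I * k / m) /
                (Complex.exp (2 * Real.pi * I * k / m) - z)) - 1)‖ ≤
      ‖z‖ ^ m / (1 - ‖z‖ ^ m) := by
  have hm0 : m ≠ 0 := by omega
  have hzm : ‖z ^ m‖ < 1 := by
    rw [norm_pow]
    exact pow_lt_one₀ (norm_nonneg z) hz hm0
  have hzm1 : z ^ m ≠ 1 := fun h => by simp [h] at hzm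
  simp_rw [exp_two_pi_mul_I_mul_div]
  rw [(isPrimitiveRoot_exp m hm0).sum_div_sub_eq hzm1, one_div, div_eq_mul_inv,
    inv_mul_cancel_left₀ (Nat.cast_ne_zero.2 hm0)]
  simpa [norm_pow] using norm_inv_one_sub_sub_one_le hzm
end

section
/- Every power function x ↦ x^j on ℝ, restricted to a compact interval [−R, R], can be uniformly approximated to arbitrary accuracy by finite linear combinations of Cauchy activations: for each ε > 0 there exist m, parameters μ₁ᵏ, μ₂ᵏ, dᵏ ≠ 0 and shifts cᵏ such that sup_{|x|≤R} |x^j − ∑_{k=1}^m (μ₁ᵏ(x−cᵏ) + μ₂ᵏ)/((x−cᵏ)² + (dᵏ)²)| < ε. -/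
open Finset

private def CApprox (R : ℝ) (f : ℝ → ℝ) : Prop :=
  ∀ ε : ℝ, 0 < ε → ∃ (m : ℕ) (μ₁ μ₂ d c : Fin m → ℝ), (∀ k, d k ≠ 0) ∧
    ∀ x : ℝ, |x| ≤ R →
      |f x - ∑ k, (μ₁ k * (x - c k) + μ₂ k) / ((x - c k) ^ 2 + (d k) ^ 2)| < ε

private lemma capprox_congr {R : ℝ} {f g : ℝ → ℝ} (h : ∀ x, f x = g x)
    (hg : CApprox R g) : CApprox R f := by
  have : f = g := funext h
  rw [this]; exact hg

private lemma capprox_single {R : ℝ} (a b c₀ d₀ : ℝ) (hd : d₀ ≠ 0) :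
    CApprox R (fun x => (a * (x - c₀) + b) / ((x - c₀) ^ 2 + d₀ ^ 2)) := by
  intro ε hε
  refine ⟨1, fun _ => a, fun _ => b, fun _ => d₀, fun _ => c₀, fun _ => hd, fun x _ => ?_⟩
  simp [hε]

private lemma capprox_add {R : ℝ} {f g : ℝ → ℝ} (hf : CApprox R f) (hg : CApprox R g) :
    CApprox R (fun x => f x + g x) := by
  intro ε hε
  obtain ⟨m₁, μ₁, μ₂, d, c, hd, h1⟩ := hf (ε/2) (by positivity)
  obtain ⟨m₂, ν₁, ν₂, e, b, he, h2⟩ := hg (ε/2) (by positivity)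
  refine ⟨m₁ + m₂, Fin.append μ₁ ν₁, Fin.append μ₂ ν₂, Fin.append d e, Fin.append c b, ?_, ?_⟩
  · intro k
    refine Fin.addCases (fun i => ?_) (fun i => ?_) k
    · simpa using hd i
    · simpa using he i
  · intro x hx
    have e1 := h1 x hx
    have e2 := h2 x hx
    rw [Fin.sum_univ_add]
    simp only [Fin.append_left, Fin.append_right]
    set S₁ := ∑ k, (μ₁ k * (x - c k) + μ₂ k) / ((x - c k) ^ 2 + (d k) ^ 2) with hS₁
    set S₂ := ∑ k, (ν₁ k * (x - b k) + ν₂ k) / ((x - b k) ^ 2 + (e k) ^ 2) with hS₂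
    have key : f x + g x - (S₁ + S₂) = (f x - S₁) + (g x - S₂) := by ring
    rw [key]
    calc |(f x - S₁) + (g x - S₂)| ≤ |f x - S₁| + |g x - S₂| := abs_add_le _ _
      _ < ε/2 + ε/2 := by exact add_lt_add e1 e2
      _ = ε := by ring

private lemma capprox_smul {R : ℝ} (a : ℝ) {f : ℝ → ℝ} (hf : CApprox R f) :
    CApprox R (fun x => a * f x) := by
  rcases eq_or_ne a 0 with rfl | ha
  · intro ε hε
    exact ⟨0, Fin.elim0, Fin.elim0, Fin.elim0, Fin.elim0, fun k => k.elim0,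
      fun x _ => by simpa using hε⟩
  · intro ε hε
    obtain ⟨m, μ₁, μ₂, d, c, hd, h1⟩ := hf (ε / |a|) (by positivity)
    refine ⟨m, fun k => a * μ₁ k, fun k => a * μ₂ k, d, c, hd, fun x hx => ?_⟩
    have : ∑ k, (a * μ₁ k * (x - c k) + a * μ₂ k) / ((x - c k) ^ 2 + (d k) ^ 2)
        = a * ∑ k, (μ₁ k * (x - c k) + μ₂ k) / ((x - c k) ^ 2 + (d k) ^ 2) := by
      rw [Finset.mul_sum]; congr 1; funext k; ring
    rw [this, ← mul_sub, abs_mul]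
    have h2 := h1 x hx
    calc |a| * |f x - ∑ k, (μ₁ k * (x - c k) + μ₂ k) / ((x - c k) ^ 2 + (d k) ^ 2)|
        < |a| * (ε / |a|) := by
          exact mul_lt_mul_of_pos_left h2 (abs_pos.mpr ha)
      _ = ε := by field_simp

private lemma capprox_close {R : ℝ} {f : ℝ → ℝ}
    (h : ∀ δ : ℝ, 0 < δ → ∃ g : ℝ → ℝ, CApprox R g ∧ ∀ x, |x| ≤ R → |f x - g x| ≤ δ) :
    CApprox R f := by
  intro ε hε
  obtain ⟨g, hg, hclose⟩ := h (ε/2) (by positivity)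
  obtain ⟨m, μ₁, μ₂, d, c, hd, hs⟩ := hg (ε/2) (by positivity)
  refine ⟨m, μ₁, μ₂, d, c, hd, fun x hx => ?_⟩
  have h1 := hclose x hx
  have h2 := hs x hx
  calc |f x - ∑ k, (μ₁ k * (x - c k) + μ₂ k) / ((x - c k) ^ 2 + (d k) ^ 2)|
      ≤ |f x - g x| + |g x - ∑ k, (μ₁ k * (x - c k) + μ₂ k) / ((x - c k) ^ 2 + (d k) ^ 2)| :=
        abs_sub_le _ _ _
    _ < ε/2 + ε/2 := add_lt_add_of_le_of_lt h1 h2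
    _ = ε := by ring

private lemma capprox_pow {R : ℝ} (hR : 0 < R) : ∀ j : ℕ,
    (∀ d : ℝ, d ≠ 0 → CApprox R (fun x => x ^ j / (x ^ 2 + d ^ 2))) ∧
    CApprox R (fun x => x ^ j) := by
  intro j
  induction j using Nat.strong_induction_on with
  | _ j ih =>
    have Q : ∀ d : ℝ, d ≠ 0 → CApprox R (fun x => x ^ j / (x ^ 2 + d ^ 2)) := by
      intro d hd
      have hd2 : (0:ℝ) < d ^ 2 := by positivity
      match j with
      | 0 =>
        refine capprox_congr (fun x => ?_) (capprox_single 0 1 0 d hd)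
        simp
      | 1 =>
        refine capprox_congr (fun x => ?_) (capprox_single 1 0 0 d hd)
        simp
      | (j' + 2) =>
        have h1 := (ih j' (by omega)).1 d hd
        have h2 := (ih j' (by omega)).2
        have h3 := capprox_add h2 (capprox_smul (-(d^2)) h1)
        refine capprox_congr (fun x => ?_) h3
        have hx : x ^ 2 + d ^ 2 ≠ 0 := by positivity
        field_simp
        ring
    refine ⟨Q, capprox_close ?_⟩
    intro δ hδ
    obtain ⟨d, hdef⟩ : ∃ d : ℝ, d = R ^ (j + 2) / δ + 1 := ⟨_, rfl⟩
    have hRj : (0:ℝ) < R ^ (j + 2) := by positivity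
    have hd1 : 1 ≤ d := by
      have : (0:ℝ) ≤ R ^ (j + 2) / δ := by positivity
      linarith
    have hd0 : (0:ℝ) < d := by linarith
    refine ⟨fun x => d ^ 2 * (x ^ j / (x ^ 2 + d ^ 2)),
      capprox_smul (d ^ 2) (Q d hd0.ne'), fun x hx => ?_⟩
    have hden : (0:ℝ) < x ^ 2 + d ^ 2 := by positivity
    have heq : x ^ j - d ^ 2 * (x ^ j / (x ^ 2 + d ^ 2)) = x ^ (j + 2) / (x ^ 2 + d ^ 2) := by
      field_simp
      ring
    rw [heq, abs_div, abs_of_pos hden]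
    have hnum : |x ^ (j + 2)| ≤ R ^ (j + 2) := by
      rw [abs_pow]
      exact pow_le_pow_left₀ (abs_nonneg x) hx _
    have hd2d : d ≤ x ^ 2 + d ^ 2 := by nlinarith
    calc |x ^ (j + 2)| / (x ^ 2 + d ^ 2) ≤ R ^ (j + 2) / d := by
          exact div_le_div₀ (le_of_lt hRj) hnum hd0 hd2d
      _ ≤ δ := by
          rw [div_le_iff₀ hd0, hdef]
          field_simp
          nlinarith
  
theorem power_approx_by_cauchy_activations
    (j : ℕ) (R : ℝ) (hR : 0 < R) (ε : ℝ) (hε : 0 < ε) :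
    ∃ (m : ℕ) (μ₁ μ₂ d c : Fin m → ℝ), (∀ k, d k ≠ 0) ∧
      ∀ x : ℝ, |x| ≤ R →
        |x ^ j - ∑ k, (μ₁ k * (x - c k) + μ₂ k) / ((x - c k) ^ 2 + (d k) ^ 2)| < ε := by
  exact (capprox_pow hR j).2 ε hε
end
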